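/- arXiv:2503.15828 — 3 statements merged into one kernel-verified Lean document; each statement's English description precedes it below -/
import Mathlib

section
/- (Lemma B.1) Suppose 𝒵₀ = {ς_i, −ς_i, 2ς_i, −2ς_i : i = 1, …, d} and that at least one component of c_𝕜 is nonzero. Then 𝒵_∞ ⊇ {k ∈ ℤ^d \ {0} : ⟨c_𝕜, k⟩ ≠ 0}. -/
open scoped BigOperators

/-- Euclidean pairing `⟨c, k⟩ = ∑ i, c i * k i` between a real vector and an
integer vector. -/
noncomputable def pairing {d : ℕ} (c : Fin d → ℝ) (k : Fin d → ℤ) : ℝ :=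
  ∑ i, c i * (k i : ℝ)

/-- `A^⊥ = {k ∈ ℤ^d : ⟨c_j, k⟩ = 0 for all j = 1, …, 𝕜}`. -/
def Aperp {d : ℕ} (kk : ℕ) (c : ℕ → Fin d → ℝ) : Set (Fin d → ℤ) :=
  {k | ∀ j : ℕ, 1 ≤ j → j ≤ kk → pairing (c j) k = 0}

/-- The set `𝕃` of sums of exactly `kk - 1` elements of `Z0`. -/
def Lset {d : ℕ} (kk : ℕ) (Z0 : Set (Fin d → ℤ)) : Set (Fin d → ℤ) :=
  {l | ∃ f : Fin (kk - 1) → (Fin d → ℤ), (∀ i, f i ∈ Z0) ∧ l = ∑ i, f i}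

/-- The recursively defined sets `𝒵ₙ`. -/
def Zn {d : ℕ} (kk : ℕ) (ck : Fin d → ℝ) (Z0 : Set (Fin d → ℤ)) :
    ℕ → Set (Fin d → ℤ)
  | 0 => Z0
  | n + 1 =>
      {x | ∃ κ ∈ Zn kk ck Z0 n, ∃ l ∈ Lset kk Z0, x = κ + l ∧ pairing ck x ≠ 0}

/-- `𝒵_∞ = ⋃ n, 𝒵ₙ`. -/
def Zinf {d : ℕ} (kk : ℕ) (ck : Fin d → ℝ) (Z0 : Set (Fin d → ℤ)) :
    Set (Fin d → ℤ) :=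
  ⋃ n : ℕ, Zn kk ck Z0 n

/-- The standard noise set `𝒵₀ = {ς_i, −ς_i, 2ς_i, −2ς_i : i = 1, …, d}`,
where `ς_i` is the `i`-th standard basis vector. -/
def stdZ0 (d : ℕ) : Set (Fin d → ℤ) :=
  {k | ∃ i : Fin d,
    k = Pi.single i 1 ∨ k = -Pi.single i 1 ∨ k = Pi.single i 2 ∨ k = -Pi.single i 2}

section Aux
variable {d : ℕ}

lemma pairing_single (c : Fin d → ℝ) (j : Fin d) (a : ℤ) :
    pairing c (Pi.single j a) = c j * a := by
  unfold pairing
  rw [Finset.sum_eq_single j]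
  · simp
  · intro i _ hne
    simp [Pi.single_eq_of_ne hne]
  · simp

lemma pairing_sub_single (c : Fin d → ℝ) (x : Fin d → ℤ) (j : Fin d) (a : ℤ) :
    pairing c (x - Pi.single j a) = pairing c x - c j * a := by
  rw [← pairing_single c j a]
  unfold pairing
  rw [← Finset.sum_sub_distrib]
  apply Finset.sum_congr rfl
  intro i _
  simp only [Pi.sub_apply, Int.cast_sub]
  ring

lemma neg_single (i : Fin d) (a : ℤ) : -(Pi.single i a : Fin d → ℤ) = Pi.single i (-a) := by
  funext x
  by_cases hx : x = i
  · subst hx; simp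
  · simp [Pi.single_eq_of_ne hx]

lemma single_mem_stdZ0 (i : Fin d) {a : ℤ} (h : a = 1 ∨ a = -1 ∨ a = 2 ∨ a = -2) :
    Pi.single i a ∈ stdZ0 d := by
  refine ⟨i, ?_⟩
  rcases h with rfl|rfl|rfl|rfl
  · exact Or.inl rfl
  · exact Or.inr (Or.inl (neg_single i 1).symm)
  · exact Or.inr (Or.inr (Or.inl rfl))
  · exact Or.inr (Or.inr (Or.inr (neg_single i 2).symm))

lemma mem_stdZ0_iff {t : Fin d → ℤ} :
    t ∈ stdZ0 d ↔ ∃ i : Fin d, ∃ a : ℤ, (a = 1 ∨ a = -1 ∨ a = 2 ∨ a = -2) ∧ t = Pi.single i a := by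
  constructor
  · rintro ⟨i, h|h|h|h⟩
    · exact ⟨i, 1, by tauto, h⟩
    · exact ⟨i, -1, by tauto, by rw [h, neg_single]⟩
    · exact ⟨i, 2, by tauto, h⟩
    · exact ⟨i, -2, by tauto, by rw [h, neg_single]⟩
  · rintro ⟨i, a, ha, rfl⟩
    exact single_mem_stdZ0 i ha

lemma stdZ0_decomp {t : Fin d → ℤ} (ht : t ∈ stdZ0 d) :
    ∃ t' z, t' ∈ stdZ0 d ∧ z ∈ stdZ0 d ∧ t = t' + z := by
  obtain ⟨i, a, ha, rfl⟩ := mem_stdZ0_iff.1 ht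
  have key : ∀ a1 a2 : ℤ, (a1 = 1 ∨ a1 = -1 ∨ a1 = 2 ∨ a1 = -2) →
      (a2 = 1 ∨ a2 = -1 ∨ a2 = 2 ∨ a2 = -2) → a = a1 + a2 →
      ∃ t' z, t' ∈ stdZ0 d ∧ z ∈ stdZ0 d ∧ Pi.single i a = t' + z := by
    intro a1 a2 h1 h2 he
    exact ⟨Pi.single i a1, Pi.single i a2, single_mem_stdZ0 i h1, single_mem_stdZ0 i h2,
      by rw [he, ← Pi.single_add]⟩
  rcases ha with rfl|rfl|rfl|rfl
  · exact key 2 (-1) (by tauto) (by tauto) (by norm_num)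
  · exact key (-2) 1 (by tauto) (by tauto) (by norm_num)
  · exact key 1 1 (by tauto) (by tauto) (by norm_num)
  · exact key (-1) (-1) (by tauto) (by tauto) (by norm_num)

lemma exists_sum_stdZ0 : ∀ m : ℕ, ∀ t ∈ stdZ0 d,
    ∃ f : Fin (m + 1) → (Fin d → ℤ), (∀ j, f j ∈ stdZ0 d) ∧ t = ∑ j, f j := by
  intro m
  induction m with
  | zero =>
    intro t ht
    exact ⟨fun _ => t, fun _ => ht, by simp⟩
  | succ n ih =>
    intro t ht
    obtain ⟨t', z, ht', hz, hdec⟩ := stdZ0_decomp ht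
    obtain ⟨f, hf, hsum⟩ := ih t' ht'
    refine ⟨Fin.snoc f z, ?_, ?_⟩
    · intro j
      refine Fin.lastCases ?_ ?_ j
      · simpa using hz
      · intro i; simpa using hf i
    · rw [Fin.sum_univ_castSucc]
      simp only [Fin.snoc_castSucc, Fin.snoc_last]
      rw [← hsum, hdec]

lemma stdZ0_subset_Lset {kk : ℕ} (hkk : 2 ≤ kk) : stdZ0 d ⊆ Lset kk (stdZ0 d) := by
  intro t ht
  obtain ⟨m, hm⟩ : ∃ m, kk - 1 = m + 1 := ⟨kk - 2, by omega⟩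
  obtain ⟨f, hf, hsum⟩ := exists_sum_stdZ0 m t ht
  refine ⟨fun j => f (Fin.cast hm j), fun j => hf _, ?_⟩
  rw [hsum]
  exact (Fin.sum_congr' f hm).symm

lemma sum_natAbs_sub_single (k : Fin d → ℤ) (j : Fin d) (a : ℤ) :
    (∑ i, (((k - Pi.single j a : Fin d → ℤ)) i).natAbs) + (k j).natAbs
      = (∑ i, (k i).natAbs) + (k j - a).natAbs := by
  set K : Fin d → ℤ := k - Pi.single j a with hK
  have e1 := (Finset.sum_erase_add Finset.univ (fun i => (K i).natAbs) (Finset.mem_univ j)).symm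
  have e2 := (Finset.sum_erase_add Finset.univ (fun i => (k i).natAbs) (Finset.mem_univ j)).symm
  have h1 : ∀ i ∈ Finset.univ.erase j, (K i).natAbs = (k i).natAbs := by
    intro i hi
    have hne : i ≠ j := Finset.ne_of_mem_erase hi
    simp [hK, Pi.single_eq_of_ne hne]
  have h2 : K j = k j - a := by simp [hK]
  rw [e1, e2, Finset.sum_congr rfl h1, h2]
  omega

end Aux

set_option maxHeartbeats 1000000 in
/-- Lemma B.1: if `𝒵₀ = {ς_i, −ς_i, 2ς_i, −2ς_i : i = 1, …, d}` and
at least one component of `c_𝕜` is nonzero, then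
`𝒵_∞ ⊇ {k ∈ ℤ^d \ {0} : ⟨c_𝕜, k⟩ ≠ 0}`. -/
theorem statement2 {d kk : ℕ} (hd : 1 ≤ d) (hk : 2 ≤ kk)
    (c : ℕ → Fin d → ℝ) (hc : ∃ i : Fin d, c kk i ≠ 0)
    (Z0 : Set (Fin d → ℤ)) (hZ0 : Z0 = stdZ0 d) :
    {k : Fin d → ℤ | k ≠ 0 ∧ pairing (c kk) k ≠ 0} ⊆ Zinf kk (c kk) Z0 := by
  subst hZ0
  set ck := c kk with hck
  have hZ0sub : ∀ z ∈ stdZ0 d, z ∈ Zinf kk ck (stdZ0 d) := fun z hz =>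
    Set.mem_iUnion.2 ⟨0, hz⟩
  have hL : stdZ0 d ⊆ Lset kk (stdZ0 d) := stdZ0_subset_Lset hk
  have hstep : ∀ κ ∈ Zinf kk ck (stdZ0 d), ∀ l ∈ Lset kk (stdZ0 d),
      pairing ck (κ + l) ≠ 0 → κ + l ∈ Zinf kk ck (stdZ0 d) := by
    rintro κ hκ l hl hp
    obtain ⟨n, hn⟩ := Set.mem_iUnion.1 hκ
    exact Set.mem_iUnion.2 ⟨n + 1, ⟨κ, hn, l, hl, rfl, hp⟩⟩
  have huse : ∀ (x : Fin d → ℤ) (jj : Fin d) (a : ℤ),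
      (a = 1 ∨ a = -1 ∨ a = 2 ∨ a = -2) → pairing ck x ≠ 0 →
      (x - Pi.single jj a) ∈ Zinf kk ck (stdZ0 d) → x ∈ Zinf kk ck (stdZ0 d) := by
    intro x jj a ha hp hκ
    have h := hstep _ hκ _ (hL (single_mem_stdZ0 jj ha)) (by rwa [sub_add_cancel])
    rwa [sub_add_cancel] at h
  suffices H : ∀ N (k : Fin d → ℤ), (∑ i, (k i).natAbs) = N → k ≠ 0 →
      pairing ck k ≠ 0 → k ∈ Zinf kk ck (stdZ0 d) by
    rintro k ⟨h0, hp⟩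
    exact H _ k rfl h0 hp
  intro N
  induction N using Nat.strong_induction_on with
  | _ N IH =>
  intro k hN hk0 hkp
  obtain ⟨j, hj⟩ : ∃ j, k j ≠ 0 := by
    by_contra h
    push_neg at h
    exact hk0 (funext h)
  by_cases hgood : ∃ jj : Fin d, ∃ s : ℤ, (s = 1 ∨ s = -1) ∧ 1 ≤ s * k jj ∧
      (pairing ck (k - Pi.single jj s) ≠ 0 ∨ 2 ≤ s * k jj)
  · obtain ⟨jj, s, hs, hsk, hcase⟩ := hgood
    by_cases hA : pairing ck (k - Pi.single jj s) ≠ 0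
    · -- Case A : remove one unit
      by_cases hz : k - Pi.single jj s = 0
      · rw [sub_eq_zero] at hz
        rw [hz]
        exact hZ0sub _ (single_mem_stdZ0 jj (by tauto))
      · have hnorm : (∑ i, (((k - Pi.single jj s : Fin d → ℤ)) i).natAbs) < N := by
          have hsum := sum_natAbs_sub_single k jj s
          rcases hs with rfl | rfl <;> omega
        exact huse k jj s (by tauto) hkp (IH _ hnorm _ rfl hz hA)
    · -- Case B : pairing (k - e) = 0 and 2 ≤ s * k jj
      push_neg at hA
      have hB : 2 ≤ s * k jj := by
        rcases hcase with h | h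
        · exact absurd hA h
        · exact h
      have hpk : pairing ck k = ck jj * s := by
        have h := pairing_sub_single ck k jj s
        rw [hA] at h
        linarith
      have hp2 : pairing ck (k - Pi.single jj (2 * s)) = -pairing ck k := by
        rw [pairing_sub_single, hpk]
        push_cast
        ring
      by_cases hz : k - Pi.single jj (2 * s) = 0
      · rw [sub_eq_zero] at hz
        rw [hz]
        exact hZ0sub _ (single_mem_stdZ0 jj (by rcases hs with rfl | rfl <;> norm_num))
      · have hnorm : (∑ i, (((k - Pi.single jj (2 * s) : Fin d → ℤ)) i).natAbs) < N := by
          have hsum := sum_natAbs_sub_single k jj (2 * s)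
          rcases hs with rfl | rfl <;> omega
        have hmem := IH _ hnorm _ rfl hz (by rw [hp2]; exact neg_ne_zero.2 hkp)
        exact huse k jj (2 * s) (by rcases hs with rfl | rfl <;> norm_num) hkp hmem
  · -- all nonzero coordinates are "bad"
    push_neg at hgood
    have hbad : ∀ jj : Fin d, k jj ≠ 0 →
        (k jj = 1 ∨ k jj = -1) ∧ pairing ck (k - Pi.single jj (k jj)) = 0 := by
      intro jj hjj
      rcases lt_or_gt_of_ne hjj with hlt | hgt
      · have h := hgood jj (-1) (Or.inr rfl) (by omega)
        have h1 : k jj = -1 := by omega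
        refine ⟨Or.inr h1, ?_⟩
        rw [h1]
        exact h.1
      · have h := hgood jj 1 (Or.inl rfl) (by omega)
        have h1 : k jj = 1 := by omega
        refine ⟨Or.inl h1, ?_⟩
        rw [h1]
        exact h.1
    by_cases hone : ∀ j', j' ≠ j → k j' = 0
    · have hkeq : k = Pi.single j (k j) := by
        funext i
        by_cases hi : i = j
        · subst hi; simp
        · rw [Pi.single_eq_of_ne hi]
          exact hone i hi
      rw [hkeq]
      exact hZ0sub _ (single_mem_stdZ0 j (by rcases (hbad j hj).1 with h | h <;> tauto))
    · push_neg at hone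
      obtain ⟨j', hj'ne, hj'⟩ := hone
      obtain ⟨hb1, hb1p⟩ := hbad j hj
      obtain ⟨hb2, hb2p⟩ := hbad j' hj'
      obtain ⟨s, hs, hsk⟩ : ∃ s : ℤ, (s = 1 ∨ s = -1) ∧ k j = s := ⟨k j, hb1, rfl⟩
      obtain ⟨s', hs', hsk'⟩ : ∃ t : ℤ, (t = 1 ∨ t = -1) ∧ k j' = t := ⟨k j', hb2, rfl⟩
      rw [hsk] at hb1p
      rw [hsk'] at hb2p
      have hpk : pairing ck k = ck j * s := by
        have h := pairing_sub_single ck k j s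
        rw [hb1p] at h
        linarith
      have hpk' : pairing ck k = ck j' * s' := by
        have h := pairing_sub_single ck k j' s'
        rw [hb2p] at h
        linarith
      have hcc : ck j' * (s' : ℝ) = ck j * (s : ℝ) := by rw [← hpk, ← hpk']
      have hκp : pairing ck (k - Pi.single j' s' - Pi.single j (2 * s))
          = -2 * pairing ck k := by
        rw [pairing_sub_single, pairing_sub_single, hpk, hcc]
        push_cast
        ring
      have hκj : (k - Pi.single j' s' - Pi.single j (2 * s) : Fin d → ℤ) j = -s := by
        simp only [Pi.sub_apply, Pi.single_eq_same,
          Pi.single_eq_of_ne (Ne.symm hj'ne)]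
        omega
      have hκ0 : (k - Pi.single j' s' - Pi.single j (2 * s) : Fin d → ℤ) ≠ 0 := by
        intro h
        have h2 := congrFun h j
        rw [hκj] at h2
        simp only [Pi.zero_apply] at h2
        rcases hs with rfl | rfl <;> omega
      have hk1j : (k - Pi.single j' s' : Fin d → ℤ) j = k j := by
        simp [Pi.single_eq_of_ne (Ne.symm hj'ne)]
      have hκnorm : (∑ i, ((k - Pi.single j' s' - Pi.single j (2 * s) : Fin d → ℤ) i).natAbs) < N := by
        have e1 := sum_natAbs_sub_single k j' s'
        have e2 := sum_natAbs_sub_single (k - Pi.single j' s') j (2 * s)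
        rw [hk1j] at e2
        have hNge : 1 ≤ N := by
          have h3 : (k j).natAbs ≤ ∑ i, (k i).natAbs :=
            Finset.single_le_sum (f := fun i => (k i).natAbs) (fun _ _ => Nat.zero_le _)
              (Finset.mem_univ j)
          omega
        rcases hs with rfl | rfl <;> rcases hs' with rfl | rfl <;> omega
      have hκmem : (k - Pi.single j' s' - Pi.single j (2 * s) : Fin d → ℤ)
          ∈ Zinf kk ck (stdZ0 d) :=
        IH _ hκnorm _ rfl hκ0 (by rw [hκp]; intro h; apply hkp; linarith)
      have hκ'p : pairing ck (k - Pi.single j (2 * s)) = -pairing ck k := by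
        rw [pairing_sub_single, hpk]
        push_cast
        ring
      have hκ'mem : (k - Pi.single j (2 * s) : Fin d → ℤ) ∈ Zinf kk ck (stdZ0 d) := by
        refine huse _ j' s' (hs'.imp id fun h => Or.inl h) ?_ ?_
        · rw [hκ'p]; exact neg_ne_zero.2 hkp
        · rw [sub_right_comm]
          exact hκmem
      exact huse k j (2 * s) (by rcases hs with rfl | rfl <;> norm_num) hkp hκ'mem
end

section
/- (Example 1.8, independence claim) Let n₁, …, n_d be pairwise distinct squarefree positive integers. Then √n₁, …, √n_d are rationally independent: if k = (k₁, …, k_d) ∈ ℤ^d satisfies k₁√n₁ + ⋯ + k_d√n_d = 0, then k = 0. -/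
/-!
For a finite set `S` of primes let `K_S ⊆ ℝ` be the field generated by the `√p`, `p ∈ S`.
Every element of `K_{S ∪ {p}}` is `a + b √p` with `a, b ∈ K_S`, and if `√p ∉ K_S` and
`(a + b √p)² ∈ K_S`, then `a = 0` or `b = 0`. Hence if `√m ∈ K_{S ∪ {p}}`, then `√m` or
`√m · √p` already lies in `K_S`, and induction on `S` shows that `√(∏ T) ∉ K_S` for every set `T`
of primes not contained in `S`. A rational relation among the `√(∏ T)`, `T ⊆ S ∪ {p}`, splits
according to whether `p ∈ T` into `α + β √p = 0` with `α, β ∈ K_S`; so `α = β = 0`, and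
induction on `S` again gives linear independence.
-/

open Finset

namespace Subfield

variable {E : Type*} [Field E] {K : Subfield E} {r : E}

theorem exists_eq_add_mul_of_mem_closure_insert (hr : r ^ 2 ∈ K) {x : E}
    (hx : x ∈ closure (insert r (K : Set E))) : ∃ a ∈ K, ∃ b ∈ K, x = a + b * r := by
  induction hx using closure_induction with
  | mem x hx =>
    rcases hx with rfl | hx
    · exact ⟨0, zero_mem _, 1, one_mem _, by ring⟩
    · exact ⟨x, hx, 0, zero_mem _, by ring⟩
  | one => exact ⟨1, one_mem _, 0, zero_mem _, by ring⟩
  | add x y _ _ hx hy =>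
    obtain ⟨a, ha, b, hb, rfl⟩ := hx
    obtain ⟨c, hc, e, he, rfl⟩ := hy
    exact ⟨a + c, add_mem ha hc, b + e, add_mem hb he, by ring⟩
  | neg x _ hx =>
    obtain ⟨a, ha, b, hb, rfl⟩ := hx
    exact ⟨-a, neg_mem ha, -b, neg_mem hb, by ring⟩
  | mul x y _ _ hx hy =>
    obtain ⟨a, ha, b, hb, rfl⟩ := hx
    obtain ⟨c, hc, e, he, rfl⟩ := hy
    exact ⟨a * c + b * e * r ^ 2, add_mem (mul_mem ha hc) (mul_mem (mul_mem hb he) hr),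
      a * e + b * c, add_mem (mul_mem ha he) (mul_mem hb hc), by ring⟩
  | inv x _ hx =>
    obtain ⟨a, ha, b, hb, rfl⟩ := hx
    -- `(a + b r)(a - b r) = a² - b² r² ∈ K`; when this vanishes, `a + b r` is `0` or `2 a`.
    have hN : a ^ 2 - b ^ 2 * r ^ 2 ∈ K := sub_mem (pow_mem ha 2) (mul_mem (pow_mem hb 2) hr)
    by_cases hN0 : a ^ 2 - b ^ 2 * r ^ 2 = 0
    · rcases mul_eq_zero.1 (show (a + b * r) * (a - b * r) = 0 by linear_combination hN0)
        with h | h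
      · exact ⟨0, zero_mem _, 0, zero_mem _, by simp [h]⟩
      · refine ⟨(a + a)⁻¹, inv_mem (add_mem ha ha), 0, zero_mem _, ?_⟩
        rw [show b * r = a by linear_combination -h]
        ring
    · refine ⟨a / (a ^ 2 - b ^ 2 * r ^ 2), div_mem ha hN,
        -b / (a ^ 2 - b ^ 2 * r ^ 2), div_mem (neg_mem hb) hN, ?_⟩
      refine (eq_inv_of_mul_eq_one_left ?_).symm
      field_simp
      ring

theorem add_mul_eq_zero_iff (hr : r ∉ K) {a b : E} (ha : a ∈ K) (hb : b ∈ K) :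
    a + b * r = 0 ↔ a = 0 ∧ b = 0 := by
  refine ⟨fun h => ?_, fun ⟨ha0, hb0⟩ => by simp [ha0, hb0]⟩
  have hb0 : b = 0 := by
    by_contra hb0
    refine hr ?_
    rw [show r = -a / b by field_simp; linear_combination h]
    exact div_mem (neg_mem ha) hb
  exact ⟨by simpa [hb0] using h, hb0⟩

theorem eq_zero_or_eq_zero_of_sq_add_mul_mem [NeZero (2 : E)] (hr : r ∉ K) (hr2 : r ^ 2 ∈ K)
    {a b : E} (ha : a ∈ K) (hb : b ∈ K) (hab : (a + b * r) ^ 2 ∈ K) : a = 0 ∨ b = 0 := by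
  have hsq : (a ^ 2 + b ^ 2 * r ^ 2 - (a + b * r) ^ 2) + 2 * (a * b) * r = 0 := by ring
  rw [add_mul_eq_zero_iff hr (sub_mem (add_mem (pow_mem ha 2) (mul_mem (pow_mem hb 2) hr2)) hab)
    (mul_mem (ofNat_mem _ 2) (mul_mem ha hb))] at hsq
  exact mul_eq_zero.1 ((mul_eq_zero.1 hsq.2).resolve_left two_ne_zero)

end Subfield

noncomputable def sqrtField (S : Finset ℕ) : Subfield ℝ :=
  Subfield.closure ((fun p : ℕ => √(p : ℝ)) '' S)

theorem sqrt_mem_sqrtField {S : Finset ℕ} {p : ℕ} (hp : p ∈ S) : √(p : ℝ) ∈ sqrtField S :=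
  Subfield.subset_closure ⟨p, hp, rfl⟩

theorem sqrt_prod_mem_sqrtField {S T : Finset ℕ} (hT : T ⊆ S) :
    √(∏ p ∈ T, p : ℕ) ∈ sqrtField S := by
  rw [Nat.cast_prod, Real.sqrt_prod _ fun _ _ => Nat.cast_nonneg _]
  exact prod_mem fun p hp => sqrt_mem_sqrtField (hT hp)

theorem sqrt_prod_insert {p : ℕ} {T : Finset ℕ} (hp : p ∉ T) :
    √(∏ q ∈ insert p T, q : ℕ) = √(p : ℝ) * √(∏ q ∈ T, q : ℕ) := by
  rw [prod_insert hp, Nat.cast_mul, Real.sqrt_mul (Nat.cast_nonneg _)]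

theorem exists_eq_add_mul_sqrt_of_mem_sqrtField_insert {S : Finset ℕ} {p : ℕ} {x : ℝ}
    (hx : x ∈ sqrtField (insert p S)) :
    ∃ a ∈ sqrtField S, ∃ b ∈ sqrtField S, x = a + b * √(p : ℝ) := by
  refine Subfield.exists_eq_add_mul_of_mem_closure_insert ?_ (Subfield.closure_mono ?_ hx)
  · rw [Real.sq_sqrt (Nat.cast_nonneg _)]
    exact natCast_mem _ p
  · rw [coe_insert, Set.image_insert_eq]
    exact Set.insert_subset_insert Subfield.subset_closure

theorem irrational_sqrt_prod_primes {T : Finset ℕ} (hT : ∀ p ∈ T, p.Prime) (hne : T.Nonempty) :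
    Irrational √(∏ p ∈ T, p : ℕ) := by
  rw [irrational_sqrt_natCast_iff]
  rintro ⟨k, hk⟩
  have hk0 : k ≠ 0 := by
    rintro rfl
    exact prod_ne_zero_iff.2 (fun p hp => (hT p hp).ne_zero) (by simpa using hk)
  have hTk : T = k.primeFactors := by
    rw [← Nat.primeFactors_prod hT, hk, Nat.primeFactors_mul hk0 hk0, union_self]
  have hkk : k * k ∣ k * 1 := by
    rw [mul_one, ← hk, hTk]
    exact Nat.prod_primeFactors_dvd k
  have hk1 : k = 1 := Nat.dvd_one.1 (Nat.dvd_of_mul_dvd_mul_left (Nat.pos_of_ne_zero hk0) hkk)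
  simp [hTk, hk1] at hne

theorem sqrt_prod_notMem_sqrtField {S : Finset ℕ} (hS : ∀ p ∈ S, p.Prime) {T : Finset ℕ}
    (hT : ∀ p ∈ T, p.Prime) {q : ℕ} (hqT : q ∈ T) (hqS : q ∉ S) :
    √(∏ p ∈ T, p : ℕ) ∉ sqrtField S := by
  induction S using Finset.induction generalizing T q with
  | empty =>
    intro hmem
    rw [sqrtField, coe_empty, Set.image_empty, Subfield.closure_empty] at hmem
    obtain ⟨r, hr⟩ := (bot_le : ⊥ ≤ (Rat.castHom ℝ).fieldRange) hmem
    exact irrational_sqrt_prod_primes hT ⟨q, hqT⟩ ⟨r, hr⟩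
  | insert p S hpS ih =>
    have hp := hS p (mem_insert_self p S)
    have hS' : ∀ p ∈ S, p.Prime := fun r hr => hS r (mem_insert_of_mem hr)
    have hqp : q ≠ p := by rintro rfl; exact hqS (mem_insert_self q S)
    have hqS' : q ∉ S := fun h => hqS (mem_insert_of_mem h)
    have hsqrt_p : √(p : ℝ) ∉ sqrtField S := by
      simpa using ih hS' (T := {p}) (by simpa using hp) (mem_singleton_self p) hpS
    intro hmem
    obtain ⟨a, ha, b, hb, hab⟩ := exists_eq_add_mul_sqrt_of_mem_sqrtField_insert hmem
    have hsq_p : √(p : ℝ) ^ 2 ∈ sqrtField S := by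
      rw [Real.sq_sqrt (Nat.cast_nonneg _)]
      exact natCast_mem _ p
    have hsq_T : (a + b * √(p : ℝ)) ^ 2 ∈ sqrtField S := by
      rw [← hab, Real.sq_sqrt (Nat.cast_nonneg _)]
      exact natCast_mem _ _
    rcases Subfield.eq_zero_or_eq_zero_of_sq_add_mul_mem hsqrt_p hsq_p ha hb hsq_T with ha0 | hb0
    · rw [ha0, zero_add] at hab
      by_cases hpT : p ∈ T
      · have hpT' : p ∉ T.erase p := notMem_erase p T
        refine ih hS' (T := T.erase p) (fun r hr => hT r (mem_of_mem_erase hr))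
          (mem_erase.2 ⟨hqp, hqT⟩) hqS' ?_
        have := hab
        rw [← insert_erase hpT, sqrt_prod_insert hpT', mul_comm] at this
        rwa [mul_right_cancel₀ (Real.sqrt_ne_zero'.2 (by exact_mod_cast hp.pos)) this]
      · refine ih hS' (T := insert p T) (forall_mem_insert _ _ _ |>.2 ⟨hp, hT⟩)
          (mem_insert_of_mem hqT) hqS' ?_
        rw [sqrt_prod_insert hpT, hab, ← mul_assoc, mul_comm _ b, mul_assoc,
          Real.mul_self_sqrt (Nat.cast_nonneg _)]
        exact mul_mem hb (natCast_mem _ p)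
    · rw [hb0, zero_mul, add_zero] at hab
      exact ih hS' hT hqT hqS' (hab ▸ ha)

theorem sqrt_notMem_sqrtField {S : Finset ℕ} (hS : ∀ p ∈ S, p.Prime) {p : ℕ} (hp : p.Prime)
    (hpS : p ∉ S) : √(p : ℝ) ∉ sqrtField S := by
  simpa using
    sqrt_prod_notMem_sqrtField hS (T := {p}) (by simpa using hp) (mem_singleton_self p) hpS

theorem linearIndepOn_sqrt_prod_powerset {S : Finset ℕ} (hS : ∀ p ∈ S, p.Prime) :
    LinearIndepOn ℚ (fun T : Finset ℕ => √(∏ p ∈ T, p : ℕ)) (S.powerset : Set (Finset ℕ)) := by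
  rw [linearIndepOn_finset_iff]
  induction S using Finset.induction with
  | empty => simp
  | insert p S hpS ih =>
    intro c hc T hT
    have hS' : ∀ p ∈ S, p.Prime := fun r hr => hS r (mem_insert_of_mem hr)
    have hsqrt_p := sqrt_notMem_sqrtField hS' (hS p (mem_insert_self p S)) hpS
    have hmem (c : Finset ℕ → ℚ) :
        ∑ U ∈ S.powerset, c U • √(∏ p ∈ U, p : ℕ) ∈ sqrtField S :=
      sum_mem fun U hU => SubfieldClass.qsmul_mem _ _ (sqrt_prod_mem_sqrtField (mem_powerset.1 hU))
    have hsplit : ∑ U ∈ S.powerset, c (insert p U) • √(∏ q ∈ insert p U, q : ℕ) =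
        (∑ U ∈ S.powerset, c (insert p U) • √(∏ q ∈ U, q : ℕ)) * √(p : ℝ) := by
      rw [sum_mul]
      refine sum_congr rfl fun U hU => ?_
      rw [sqrt_prod_insert fun h => hpS (mem_powerset.1 hU h), smul_mul_assoc, mul_comm]
    rw [sum_powerset_insert hpS, hsplit,
      Subfield.add_mul_eq_zero_iff hsqrt_p (hmem c) (hmem _)] at hc
    rw [powerset_insert, mem_union, mem_image] at hT
    rcases hT with hT | ⟨U, hU, rfl⟩
    · exact ih hS' c hc.1 T hT
    · exact ih hS' (fun U => c (insert p U)) hc.2 U hU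

theorem linearIndepOn_sqrt_prod_primes :
    LinearIndepOn ℚ (fun T : Finset ℕ => √(∏ p ∈ T, p : ℕ)) {T | ∀ p ∈ T, p.Prime} := by
  refine linearIndepOn_of_finite _ fun t ht htfin => ?_
  refine (linearIndepOn_sqrt_prod_powerset (S := htfin.toFinset.biUnion id) ?_).mono
    fun T hT => mem_powerset.2 (subset_biUnion_of_mem id (htfin.mem_toFinset.2 hT))
  simp only [mem_biUnion, id]
  rintro p ⟨T, hT, hpT⟩
  exact ht (htfin.mem_toFinset.1 hT) p hpT

theorem linearIndependent_sqrt_of_squarefree {ι : Type*} {n : ι → ℕ}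
    (hsf : ∀ i, Squarefree (n i)) (hn : Function.Injective n) :
    LinearIndependent ℚ (fun i => √(n i : ℝ)) := by
  have hprod (i : ι) : ∏ p ∈ (n i).primeFactors, p = n i :=
    Nat.prod_primeFactors_of_squarefree (hsf i)
  have := linearIndepOn_sqrt_prod_primes.linearIndependent.comp
    (fun i => ⟨(n i).primeFactors, fun _ => Nat.prime_of_mem_primeFactors⟩) fun i j h => hn <| by
      rw [← hprod i, ← hprod j, show (n i).primeFactors = (n j).primeFactors from congrArg (·.1) h]
  simpa only [Function.comp_def, hprod] using this

theorem statement8_general {d : ℕ} (n : Fin d → ℕ)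
    (hsf : ∀ i, Squarefree (n i))
    (hdist : Function.Injective n) :
    ∀ k : Fin d → ℤ, (∑ i, (k i : ℝ) * Real.sqrt (n i)) = 0 → k = 0 := by
  intro k hk
  funext i
  have := Fintype.linearIndependent_iff.1 (linearIndependent_sqrt_of_squarefree hsf hdist)
    (fun i => (k i : ℚ)) (by simpa [Rat.smul_def] using hk) i
  exact_mod_cast this

/-- Example 1.8, independence claim: square roots of pairwise
distinct squarefree positive integers are rationally independent. -/
theorem statement8 {d : ℕ} (n : Fin d → ℕ)
    (hpos : ∀ i, 0 < n i) (hsf : ∀ i, Squarefree (n i))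
    (hdist : Function.Injective n) :
    ∀ k : Fin d → ℤ, (∑ i, (k i : ℝ) * Real.sqrt (n i)) = 0 → k = 0 :=
  statement8_general n hsf hdist
end

section
/- (Identity (1.14), key step of Proposition 1.4) Let k ∈ A^⊥ and let f : ℝ^d → ℝ be continuously differentiable and 2π-periodic in each coordinate (f(x + 2π ς_i) = f(x) for all x ∈ ℝ^d and i = 1, …, d). Then ∫_{[−π,π]^d} (∑_{i=1}^d ∂/∂x_i [A_i(f(x))]) · sin(⟨k, x⟩) dx = 0 and ∫_{[−π,π]^d} (∑_{i=1}^d ∂/∂x_i [A_i(f(x))]) · cos(⟨k, x⟩) dx = 0. -/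
/-!
Put `G_i := A_i ∘ f - A_i(0)`. Then `∑ᵢ G_i(x) k_i = ∑_{j ≥ 1} f(x)^j ⟨c_j, k⟩ = 0`, so for
`h = sin` or `cos` the product rule gives `div (G · h(⟨k, x⟩)) = (div G) · h(⟨k, x⟩)`, and
`div G = div (A ∘ f)`. Since `k` is integral, the field `G · h(⟨k, x⟩)` is `2π`-periodic in every
coordinate, so by the divergence theorem its divergence integrates to zero over `[-π, π]^d`:
the fluxes through opposite faces cancel.
-/

open MeasureTheory Set

theorem Fin.insertNth_eq_insertNth_add_single {α : Type*} [AddCommGroup α] {n : ℕ}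
    (i : Fin (n + 1)) (s t : α) (y : Fin n → α) :
    (i.insertNth t y : Fin (n + 1) → α) = i.insertNth s y + Pi.single i (t - s) := by
  ext j
  refine Fin.succAboveCases i ?_ (fun m => ?_) j <;> simp

theorem integral_divergence_eq_zero_of_periodic {d : ℕ} {a b : Fin d → ℝ} (hle : a ≤ b)
    (V : Fin d → (Fin d → ℝ) → ℝ) (hV : ∀ i, ContDiff ℝ 1 (V i))
    (hper : ∀ i x, V i (x + Pi.single i (b i - a i)) = V i x) :
    ∫ x in Icc a b, ∑ i, fderiv ℝ (V i) x (Pi.single i 1) = 0 := by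
  cases d with
  | zero => simp
  | succ n =>
    have hcont : Continuous fun x => ∑ i, fderiv ℝ (V i) x (Pi.single i 1) :=
      continuous_finsetSum _ fun i _ =>
        ((hV i).continuous_fderiv one_ne_zero).clm_apply continuous_const
    rw [integral_divergence_of_hasFDerivAt_off_countable' a b hle V (fun i => fderiv ℝ (V i)) ∅
      countable_empty (fun i => (hV i).continuous.continuousOn)
      (fun x _ i => ((hV i).differentiable one_ne_zero x).hasFDerivAt)
      (hcont.continuousOn.integrableOn_compact isCompact_Icc)]
    refine Finset.sum_eq_zero fun i _ =>
      sub_eq_zero.2 <| integral_congr_ae <| ae_of_all _ fun y => ?_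
    change V i _ = V i _
    rw [Fin.insertNth_eq_insertNth_add_single i (a i), hper]

theorem sum_mul_add_single {d : ℕ} (k x : Fin d → ℝ) (i : Fin d) (t : ℝ) :
    ∑ j, k j * (x + Pi.single i t : Fin d → ℝ) j = ∑ j, k j * x j + k i * t := by
  simp [mul_add, Finset.sum_add_distrib, Pi.single_apply]

theorem fderiv_mul_comp_sum_mul_apply_single {d : ℕ} {G : (Fin d → ℝ) → ℝ} {h : ℝ → ℝ}
    {x : Fin d → ℝ} (k : Fin d → ℝ) (hG : DifferentiableAt ℝ G x)
    (hh : DifferentiableAt ℝ h (∑ j, k j * x j)) (i : Fin d) :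
    fderiv ℝ (fun y => G y * h (∑ j, k j * y j)) x (Pi.single i 1) =
      fderiv ℝ G x (Pi.single i 1) * h (∑ j, k j * x j) +
        G x * (deriv h (∑ j, k j * x j) * k i) := by
  have hφ : HasFDerivAt (fun y : Fin d → ℝ => ∑ j, k j * y j)
      (∑ j, k j • ContinuousLinearMap.proj (R := ℝ) (φ := fun _ : Fin d => ℝ) j) x :=
    HasFDerivAt.fun_sum fun j _ => (hasFDerivAt_apply j x).const_mul (k j)
  have hhφ : HasFDerivAt (fun y => h (∑ j, k j * y j)) _ x := hh.hasDerivAt.comp_hasFDerivAt x hφ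
  rw [(hG.hasFDerivAt.fun_mul hhφ).fderiv]
  simp only [add_apply, smul_apply,
    sum_apply, ContinuousLinearMap.proj_apply, Pi.single_apply, smul_eq_mul,
    mul_ite, mul_one, mul_zero, Finset.sum_ite_eq', Finset.mem_univ, ↓reduceIte]
  ring

theorem integral_divergence_mul_comp_sum_mul_eq_zero {d : ℕ} (G : Fin d → (Fin d → ℝ) → ℝ)
    (hG : ∀ i, ContDiff ℝ 1 (G i))
    (hGper : ∀ i x, G i (x + Pi.single i (2 * Real.pi)) = G i x)
    (k : Fin d → ℤ) (c : Fin d → ℝ) (hGk : ∀ x, ∑ i, (G i x - c i) * k i = 0)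
    {h : ℝ → ℝ} (hh : ContDiff ℝ 1 h) (hhper : Function.Periodic h (2 * Real.pi)) :
    ∫ x in Icc (fun _ => -Real.pi) (fun _ => Real.pi),
      (∑ i, fderiv ℝ (G i) x (Pi.single i 1)) * h (∑ i, (k i : ℝ) * x i) = 0 := by
  set V : Fin d → (Fin d → ℝ) → ℝ := fun i x => (G i x - c i) * h (∑ j, (k j : ℝ) * x j)
  have hV : ∀ i, ContDiff ℝ 1 (V i) := fun i =>
    ((hG i).sub contDiff_const).mul <| hh.comp <|
      ContDiff.sum fun j _ => contDiff_const.mul (contDiff_apply ℝ ℝ j)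
  have hVper : ∀ i x, V i (x + Pi.single i (Real.pi - -Real.pi)) = V i x := by
    intro i x
    simp only [V, show Real.pi - -Real.pi = 2 * Real.pi by ring, hGper,
      sum_mul_add_single, hhper.int_mul (k i) _]
  have hdivV : ∀ x, ∑ i, fderiv ℝ (V i) x (Pi.single i 1) =
      (∑ i, fderiv ℝ (G i) x (Pi.single i 1)) * h (∑ i, (k i : ℝ) * x i) := by
    intro x
    have hφ := (hh.differentiable one_ne_zero) (∑ j, (k j : ℝ) * x j)
    simp only [V, fun i => fderiv_mul_comp_sum_mul_apply_single (fun j => (k j : ℝ))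
      (((hG i).differentiable one_ne_zero x).sub_const (c i)) hφ i, fderiv_sub_const]
    calc _ = (∑ i, fderiv ℝ (G i) x (Pi.single i 1)) * h (∑ i, (k i : ℝ) * x i) +
          deriv h (∑ j, (k j : ℝ) * x j) * ∑ i, (G i x - c i) * k i := by
          rw [Finset.sum_add_distrib, Finset.sum_mul, Finset.mul_sum]
          congr 1
          exact Finset.sum_congr rfl fun i _ => by ring
      _ = _ := by rw [hGk, mul_zero, add_zero]
  simpa only [hdivV] using integral_divergence_eq_zero_of_periodic
    (fun i => neg_le_self Real.pi_pos.le) V hV hVper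

theorem sum_sub_coeff_zero_mul_eq_zero {d kk : ℕ} (coef : Fin d → ℕ → ℝ) (k : Fin d → ℤ)
    (hkperp : ∀ j : ℕ, 1 ≤ j → j ≤ kk → ∑ i, coef i j * (k i : ℝ) = 0) (u : ℝ) :
    ∑ i, (∑ j ∈ Finset.range (kk + 1), coef i j * u ^ j - coef i 0) * k i = 0 := by
  simp only [Finset.sum_range_succ', pow_zero, mul_one, add_sub_cancel_right, Finset.sum_mul]
  rw [Finset.sum_comm]
  refine Finset.sum_eq_zero fun j hj => ?_
  have hj : j + 1 ≤ kk := Finset.mem_range.1 hj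
  calc _ = (∑ i, coef i (j + 1) * k i) * u ^ (j + 1) := by
        rw [Finset.sum_mul]
        exact Finset.sum_congr rfl fun i _ => by ring
    _ = 0 := by rw [hkperp (j + 1) (by omega) hj, zero_mul]

theorem statement10_general {d kk : ℕ}
    (coef : Fin d → ℕ → ℝ)
    (k : Fin d → ℤ)
    (hkperp : ∀ j : ℕ, 1 ≤ j → j ≤ kk → ∑ i, coef i j * (k i : ℝ) = 0)
    (f : (Fin d → ℝ) → ℝ) (hf : ContDiff ℝ 1 f)
    (hper : ∀ (x : Fin d → ℝ) (i : Fin d), f (x + Pi.single i (2 * Real.pi)) = f x) :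
    (∫ x in Set.univ.pi (fun _ : Fin d => Set.Icc (-Real.pi) Real.pi),
        (∑ i, fderiv ℝ (fun y => ∑ j ∈ Finset.range (kk + 1), coef i j * f y ^ j) x
            (Pi.single i 1)) * Real.sin (∑ i, (k i : ℝ) * x i)) = 0 ∧
    (∫ x in Set.univ.pi (fun _ : Fin d => Set.Icc (-Real.pi) Real.pi),
        (∑ i, fderiv ℝ (fun y => ∑ j ∈ Finset.range (kk + 1), coef i j * f y ^ j) x
            (Pi.single i 1)) * Real.cos (∑ i, (k i : ℝ) * x i)) = 0 := by
  set A : Fin d → (Fin d → ℝ) → ℝ := fun i y => ∑ j ∈ Finset.range (kk + 1), coef i j * f y ^ j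
  have hA : ∀ i, ContDiff ℝ 1 (A i) := fun i =>
    ContDiff.sum fun j _ => contDiff_const.mul (hf.pow j)
  have hAper : ∀ i x, A i (x + Pi.single i (2 * Real.pi)) = A i x := by
    intro i x
    simp only [A, hper]
  have hAk : ∀ x, ∑ i, (A i x - coef i 0) * k i = 0 := fun x =>
    sum_sub_coeff_zero_mul_eq_zero coef k hkperp (f x)
  rw [Set.pi_univ_Icc]
  exact ⟨integral_divergence_mul_comp_sum_mul_eq_zero A hA hAper k _ hAk
      Real.contDiff_sin Real.sin_periodic,
    integral_divergence_mul_comp_sum_mul_eq_zero A hA hAper k _ hAk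
      Real.contDiff_cos Real.cos_periodic⟩

/-- identity (1.14): if `k ∈ A^⊥` and `f : ℝ^d → ℝ` is `C¹` and
`2π`-periodic in each coordinate, then the integral over `[−π, π]^d` of
`div A(f) · sin⟨k, x⟩` and of `div A(f) · cos⟨k, x⟩` both vanish, where
`A_i(u) = ∑_{j=0}^{𝕜} c_{i,j} u^j`. -/
theorem statement10 {d kk : ℕ} (hd : 1 ≤ d) (hk : 1 ≤ kk)
    (coef : Fin d → ℕ → ℝ)
    (k : Fin d → ℤ)
    (hkperp : ∀ j : ℕ, 1 ≤ j → j ≤ kk → ∑ i, coef i j * (k i : ℝ) = 0)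
    (f : (Fin d → ℝ) → ℝ) (hf : ContDiff ℝ 1 f)
    (hper : ∀ (x : Fin d → ℝ) (i : Fin d), f (x + Pi.single i (2 * Real.pi)) = f x) :
    (∫ x in Set.univ.pi (fun _ : Fin d => Set.Icc (-Real.pi) Real.pi),
        (∑ i, fderiv ℝ (fun y => ∑ j ∈ Finset.range (kk + 1), coef i j * f y ^ j) x
            (Pi.single i 1)) * Real.sin (∑ i, (k i : ℝ) * x i)) = 0 ∧
    (∫ x in Set.univ.pi (fun _ : Fin d => Set.Icc (-Real.pi) Real.pi),
        (∑ i, fderiv ℝ (fun y => ∑ j ∈ Finset.range (kk + 1), coef i j * f y ^ j) x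
            (Pi.single i 1)) * Real.cos (∑ i, (k i : ℝ) * x i)) = 0 :=
  statement10_general coef k hkperp f hf hper
end
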